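/- The matrix χ := Σ_{t=1}^{d−1} V σ_z^{(0t)} V⁻¹ equals Σ_{0 ≤ j < k ≤ d−1} σ_x^{(jk)}, i.e. χ = i(J − I) where J is the d×d all-ones matrix and I is the identity. -/

import Mathlib

open scoped Matrix
open Finset

/-- The d×d Fourier matrix V with entries V_{jk} = ω^{jk}/√d, ω = exp(2πi/d). -/
noncomputable def fourierV (d : ℕ) : Matrix (Fin d) (Fin d) ℂ :=
  Matrix.of fun j k =>
    Complex.exp (2 * Real.pi * Complex.I / d) ^ ((j : ℕ) * (k : ℕ)) / (Real.sqrt d : ℂ)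

/-- σ_z^{(jk)} = i(E_{jj} − E_{kk}). -/
noncomputable def sigmaZ {d : ℕ} (j k : Fin d) : Matrix (Fin d) (Fin d) ℂ :=
  Complex.I • (Matrix.single j j 1 - Matrix.single k k 1)

/-- σ_x^{(jk)} = i(E_{jk} + E_{kj}). -/
noncomputable def sigmaX {d : ℕ} (j k : Fin d) : Matrix (Fin d) (Fin d) ℂ :=
  Complex.I • (Matrix.single j k 1 + Matrix.single k j 1)

/-!
Conjugating `E_tt` by the unitary `V` gives the projector `P_t` onto the `t`-th Fourier vector,
and `∑ₜ P_t = V Vᴴ = 1`. Hence `χ = i((d - 1) P₀ - (1 - P₀)) = i(d P₀ - 1)`, and `d P₀ = J`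
because the zeroth Fourier vector is the constant vector `1/√d`. Unitarity of `V` is the
orthogonality `∑ₜ ζ^{jt} ζ^{-kt} = d δ_{jk}` of the powers of a primitive `d`-th root of unity.
-/

theorem IsPrimitiveRoot.sum_pow_mul_inv_pow {K : Type*} [Field K] {ζ : K} {d : ℕ}
    (hζ : IsPrimitiveRoot ζ d) (j k : Fin d) :
    ∑ t : Fin d, ζ ^ ((j : ℕ) * t) * (ζ ^ ((k : ℕ) * t))⁻¹ = if j = k then (d : K) else 0 := by
  have hζ0 : ζ ≠ 0 := hζ.ne_zero (Fin.pos j).ne'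
  set z := ζ ^ (j : ℕ) * (ζ ^ (k : ℕ))⁻¹
  have hterm (t : ℕ) : ζ ^ ((j : ℕ) * t) * (ζ ^ ((k : ℕ) * t))⁻¹ = z ^ t := by
    rw [mul_pow, inv_pow, pow_mul, pow_mul]
  simp_rw [hterm]
  rw [Fin.sum_univ_eq_sum_range (z ^ ·)]
  split_ifs with hjk
  · simp [z, hjk, hζ0]
  · have hz : z ≠ 1 := fun h => hjk <| Fin.ext <|
      hζ.pow_inj j.isLt k.isLt ((mul_inv_eq_one₀ (pow_ne_zero _ hζ0)).mp h)
    have hzd : z ^ d = 1 := by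
      rw [mul_pow, inv_pow, ← pow_mul, ← pow_mul, pow_mul', hζ.pow_eq_one, pow_mul',
        hζ.pow_eq_one, one_pow, one_pow, inv_one, mul_one]
    rw [geom_sum_eq hz, hzd, sub_self, zero_div]

theorem Complex.ofReal_sqrt_mul_self {x : ℝ} (hx : 0 ≤ x) : (√x : ℂ) * √x = x := by
  rw [← Complex.ofReal_mul, Real.mul_self_sqrt hx]

theorem Matrix.mul_single_mul_apply {l m n o α : Type*} [Fintype m] [Fintype n]
    [DecidableEq m] [DecidableEq n] [Semiring α] (A : Matrix l m α) (i : m) (j : n) (c : α)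
    (B : Matrix n o α) (k : l) (r : o) :
    (A * Matrix.single i j c * B) k r = A k i * c * B j r := by
  rw [Matrix.mul_assoc, Matrix.mul_apply, sum_eq_single i, Matrix.single_mul_apply_same, mul_assoc]
  · intro b _ hb
    rw [Matrix.single_mul_apply_of_ne _ _ _ _ _ hb, mul_zero]
  · simp

theorem Matrix.sum_erase_single_sub_single {n α : Type*} [Fintype n] [DecidableEq n] [Ring α]
    (a : n) :
    ∑ t ∈ univ.erase a, (Matrix.single a a (1 : α) - Matrix.single t t 1) =
      Fintype.card n • Matrix.single a a 1 - 1 := by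
  have hcard : Fintype.card n = (univ.erase a).card + 1 := by
    rw [card_erase_add_one (mem_univ a), card_univ]
  rw [sum_sub_distrib, sum_const, ← Matrix.sum_single_one, ← add_sum_erase _ _ (mem_univ a), hcard,
    succ_nsmul]
  abel

theorem sum_erase_mul_sigmaZ_mul {d : ℕ} {A B : Matrix (Fin d) (Fin d) ℂ} (hAB : A * B = 1)
    (a : Fin d) :
    ∑ t ∈ univ.erase a, A * sigmaZ a t * B =
      Complex.I • ((d : ℂ) • (A * Matrix.single a a 1 * B) - 1) :=
  calc ∑ t ∈ univ.erase a, A * sigmaZ a t * B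
      = Complex.I •
          (A * (∑ t ∈ univ.erase a, (Matrix.single a a 1 - Matrix.single t t 1)) * B) := by
        rw [mul_sum, sum_mul, smul_sum]
        simp only [sigmaZ, Matrix.mul_smul, Matrix.smul_mul]
    _ = Complex.I • ((d : ℂ) • (A * Matrix.single a a 1 * B) - 1) := by
        rw [Matrix.sum_erase_single_sub_single, Fintype.card_fin, Matrix.mul_sub, Matrix.sub_mul,
          Matrix.mul_one, hAB, Matrix.mul_smul, Matrix.smul_mul, Nat.cast_smul_eq_nsmul]

theorem sum_sigmaX_lt (d : ℕ) :
    ∑ p ∈ univ.filter (fun p : Fin d × Fin d => p.1 < p.2), sigmaX p.1 p.2 =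
      Complex.I • ((Matrix.of fun _ _ : Fin d => (1 : ℂ)) - 1) := by
  ext j k
  have hentry (p : Fin d × Fin d) : sigmaX p.1 p.2 j k =
      Complex.I * ((if (j, k) = p then 1 else 0) + if (k, j) = p then 1 else 0) := by
    simp [sigmaX, Matrix.single_apply, Prod.ext_iff, eq_comm, and_comm]
  simp only [Matrix.sum_apply, hentry, ← mul_sum, sum_add_distrib, sum_ite_eq, mem_filter,
    mem_univ, true_and, Matrix.smul_apply, Matrix.sub_apply, Matrix.of_apply, Matrix.one_apply,
    smul_eq_mul]
  rcases lt_trichotomy j k with h | rfl | h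
  · simp [h, h.ne, h.not_gt]
  · simp
  · simp [h, h.ne', h.not_gt]

noncomputable def fourierRoot (d : ℕ) : ℂ := Complex.exp (2 * Real.pi * Complex.I / d)

theorem fourierV_apply (d : ℕ) (j k : Fin d) :
    fourierV d j k = fourierRoot d ^ ((j : ℕ) * k) / (Real.sqrt d : ℂ) := rfl

theorem isPrimitiveRoot_fourierRoot (d : ℕ) [NeZero d] : IsPrimitiveRoot (fourierRoot d) d :=
  Complex.isPrimitiveRoot_exp d (NeZero.ne d)

theorem fourierV_conjTranspose_apply (d : ℕ) [NeZero d] (j k : Fin d) :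
    (fourierV d)ᴴ j k = (fourierRoot d ^ ((k : ℕ) * j))⁻¹ / (Real.sqrt d : ℂ) := by
  rw [Matrix.conjTranspose_apply, fourierV_apply, star_div₀, star_pow, ← inv_pow,
    Complex.inv_eq_conj ((isPrimitiveRoot_fourierRoot d).norm'_eq_one (NeZero.ne d))]
  simp [Complex.conj_ofReal]

theorem fourierV_mul_conjTranspose (d : ℕ) [NeZero d] : fourierV d * (fourierV d)ᴴ = 1 := by
  ext j k
  have hd : (d : ℂ) ≠ 0 := Nat.cast_ne_zero.mpr (NeZero.ne d)
  simp_rw [Matrix.mul_apply, fourierV_conjTranspose_apply, fourierV_apply, div_mul_div_comm,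
    Complex.ofReal_sqrt_mul_self d.cast_nonneg, Complex.ofReal_natCast, ← sum_div,
    (isPrimitiveRoot_fourierRoot d).sum_pow_mul_inv_pow, Matrix.one_apply]
  split_ifs <;> simp [hd]

theorem inv_fourierV (d : ℕ) [NeZero d] : (fourierV d)⁻¹ = (fourierV d)ᴴ :=
  Matrix.inv_eq_right_inv (fourierV_mul_conjTranspose d)

theorem fourierV_mul_single_zero_mul_conjTranspose (d : ℕ) [NeZero d] :
    fourierV d * Matrix.single 0 0 1 * (fourierV d)ᴴ =
      (d : ℂ)⁻¹ • Matrix.of fun _ _ : Fin d => (1 : ℂ) := by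
  ext j k
  rw [Matrix.mul_single_mul_apply, fourierV_apply, fourierV_conjTranspose_apply, mul_one,
    div_mul_div_comm, Complex.ofReal_sqrt_mul_self d.cast_nonneg, Complex.ofReal_natCast]
  simp

/-- χ = Σ_{t=1}^{d−1} V σ_z^{(0t)} V⁻¹ equals Σ_{0 ≤ j < k ≤ d−1} σ_x^{(jk)},
    i.e. χ = i(J − I) with J the all-ones matrix. -/
theorem chi_eq_sum_sigmaX (d : ℕ) [NeZero d] :
    (∑ t ∈ univ.filter (fun t : Fin d => 1 ≤ (t : ℕ)),
        fourierV d * sigmaZ (0 : Fin d) t * (fourierV d)⁻¹) =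
      (∑ p ∈ univ.filter (fun p : Fin d × Fin d => p.1 < p.2), sigmaX p.1 p.2) ∧
    (∑ t ∈ univ.filter (fun t : Fin d => 1 ≤ (t : ℕ)),
        fourierV d * sigmaZ (0 : Fin d) t * (fourierV d)⁻¹) =
      Complex.I • ((Matrix.of fun _ _ : Fin d => (1 : ℂ)) - 1) := by
  have hd : (d : ℂ) ≠ 0 := Nat.cast_ne_zero.mpr (NeZero.ne d)
  have hfilter : univ.filter (fun t : Fin d => 1 ≤ (t : ℕ)) = univ.erase 0 := by
    ext t
    simp [Nat.one_le_iff_ne_zero, Fin.val_eq_zero_iff]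
  rw [hfilter, inv_fourierV, sum_erase_mul_sigmaZ_mul (fourierV_mul_conjTranspose d),
    fourierV_mul_single_zero_mul_conjTranspose, smul_smul, mul_inv_cancel₀ hd, one_smul,
    sum_sigmaX_lt]
  exact ⟨rfl, rfl⟩
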